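/- arXiv:1602.04546 — 7 statements merged into one kernel-verified Lean document; each statement's English description precedes it below -/
import Mathlib

section
/- Let a, b, c be nonnegative integers with a+b+c even and |a−b| ≤ c ≤ a+b. Set σ := (a+b+c)/2, x := (−a+b+c)/2, y := (a−b+c)/2, w := (a+b−c)/2, and let T ∈ ℤ[v,v⁻¹] be the Laurent polynomial with T·[x]!·[y]!·[w]! = [σ]!. Define the colored theta graph evaluation ⟨Θ a,b,c⟩ := (−1)^σ [σ+1]·T. Then d₊⟨Θ a,b,c⟩ = a(1−a) + b(1−b) + c(1−c) + (a+b+c)²/2, and the coefficient of this top-degree term is ±1. -/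
/-!
A Laurent polynomial whose top coefficient is a unit behaves like a monic polynomial: such
leading terms multiply, and if `g` and `f * g` both have one then so does `f`, in degree
`deg (f * g) - deg g`. The top term of `[k]` is `v^(2k-2)`, so that of `[k]!` is `v^(k(k-1))`.
Cancelling `[x]! [y]! [w]!` from `[σ]!` and multiplying by `[σ+1]` and the sign,
`⟨Θ a,b,c⟩` has leading term `±v^N` with `N = 2σ + σ(σ-1) - x(x-1) - y(y-1) - w(w-1)`;
substituting `a = y + w`, `b = x + w`, `c = x + y` shows that `N` is the stated degree.
-/

open LaurentPolynomial

/-- The balanced quantum integer `[k]` in `ℤ[v,v⁻¹]`. -/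
noncomputable def qint (k : ℕ) : LaurentPolynomial ℤ :=
  ∑ i ∈ Finset.range k, LaurentPolynomial.T (2 * ((k : ℤ) - 1) - 4 * (i : ℤ))

/-- The balanced quantum factorial `[k]! = [1][2]⋯[k]`, with `[0]! = 1`. -/
noncomputable def qfact (k : ℕ) : LaurentPolynomial ℤ :=
  ∏ i ∈ Finset.range k, qint (i + 1)

namespace LaurentPolynomial

variable {R : Type*}

section Semiring

variable [Semiring R]

theorem degree_eq_supDegree (f : R[T;T⁻¹]) : f.degree = f.supDegree (↑) :=
  Finset.max_eq_sup_withBot _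

theorem le_degree_of_coeff_ne_zero {f : R[T;T⁻¹]} {n : ℤ} (h : f.coeff n ≠ 0) :
    (n : WithBot ℤ) ≤ f.degree :=
  Finset.le_max (Finsupp.mem_support_iff.mpr h)

theorem coeff_ne_zero_of_degree_eq {f : R[T;T⁻¹]} {d : ℤ} (h : f.degree = d) :
    f.coeff d ≠ 0 :=
  Finsupp.mem_support_iff.mp (Finset.mem_of_max h)

theorem coeff_T (n m : ℤ) : (T n : R[T;T⁻¹]).coeff m = if n = m then 1 else 0 := by
  rw [T, AddMonoidAlgebra.coeff_single, Finsupp.single_apply]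

theorem degree_mul_le (f g : R[T;T⁻¹]) : (f * g).degree ≤ f.degree + g.degree := by
  simp only [degree_eq_supDegree]
  exact AddMonoidAlgebra.supDegree_mul_le fun _ _ => WithBot.coe_add ..

theorem degree_sum_le {ι : Type*} (s : Finset ι) (f : ι → R[T;T⁻¹]) :
    (∑ i ∈ s, f i).degree ≤ s.sup fun i => (f i).degree := by
  simp only [degree_eq_supDegree]
  exact AddMonoidAlgebra.supDegree_sum_le

theorem coeff_mul_of_degree_le {f g : R[T;T⁻¹]} {d e : ℤ} (hf : f.degree ≤ d)
    (hg : g.degree ≤ e) : (f * g).coeff (d + e) = f.coeff d * g.coeff e := by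
  refine AddMonoidAlgebra.coeff_mul_add_of_uniqueAdd fun a b ha hb hab => ?_
  have had : a ≤ d := WithBot.coe_le_coe.mp ((Finset.le_max ha).trans hf)
  have hbe : b ≤ e := WithBot.coe_le_coe.mp ((Finset.le_max hb).trans hg)
  omega

def HasUnitLeadingTerm (f : R[T;T⁻¹]) (d : ℤ) : Prop :=
  f.degree = d ∧ IsUnit (f.coeff d)

theorem HasUnitLeadingTerm.of_mul_right {f g : R[T;T⁻¹]} {e m : ℤ}
    (hg : g.HasUnitLeadingTerm e) (hfg : (f * g).HasUnitLeadingTerm m) :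
    f.HasUnitLeadingTerm (m - e) := by
  obtain ⟨d, hd⟩ : ∃ d : ℤ, ↑d = f.degree := by
    refine WithBot.ne_bot_iff_exists.mp fun h => ?_
    rw [degree_eq_bot_iff.mp h, zero_mul] at hfg
    exact WithBot.bot_ne_coe (degree_zero.symm.trans hfg.1)
  have hcoeff : (f * g).coeff (d + e) = f.coeff d * g.coeff e :=
    coeff_mul_of_degree_le hd.ge hg.1.le
  have hle : d + e ≤ m := by
    have hne : (f * g).coeff (d + e) ≠ 0 := by
      rw [hcoeff, Ne, hg.2.mul_left_eq_zero]
      exact coeff_ne_zero_of_degree_eq hd.symm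
    exact WithBot.coe_le_coe.mp (hfg.1 ▸ le_degree_of_coeff_ne_zero hne)
  have hge : m ≤ d + e := by
    have := degree_mul_le f g
    rwa [hfg.1, ← hd, hg.1, ← WithBot.coe_add, WithBot.coe_le_coe] at this
  obtain rfl : d = m - e := by omega
  refine ⟨hd.symm, ?_⟩
  rw [← hg.2.mul_right_iff, ← hcoeff, sub_add_cancel]
  exact hfg.2

variable [Nontrivial R]

theorem hasUnitLeadingTerm_of_degree_le {f : R[T;T⁻¹]} {d : ℤ} (hf : f.degree ≤ d)
    (hd : IsUnit (f.coeff d)) : f.HasUnitLeadingTerm d :=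
  ⟨hf.antisymm (le_degree_of_coeff_ne_zero hd.ne_zero), hd⟩

theorem hasUnitLeadingTerm_T (n : ℤ) : (T n : R[T;T⁻¹]).HasUnitLeadingTerm n :=
  ⟨degree_T n, by rw [coeff_T, if_pos rfl]; exact isUnit_one⟩

theorem HasUnitLeadingTerm.mul {f g : R[T;T⁻¹]} {d e : ℤ} (hf : f.HasUnitLeadingTerm d)
    (hg : g.HasUnitLeadingTerm e) : (f * g).HasUnitLeadingTerm (d + e) := by
  refine hasUnitLeadingTerm_of_degree_le ?_ ?_
  · exact (degree_mul_le f g).trans (by rw [hf.1, hg.1]; rfl)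
  · rw [coeff_mul_of_degree_le hf.1.le hg.1.le]
    exact hf.2.mul hg.2

end Semiring

theorem HasUnitLeadingTerm.neg_one_pow_mul [Ring R] {f : R[T;T⁻¹]} {d : ℤ}
    (hf : f.HasUnitLeadingTerm d) (n : ℕ) : ((-1) ^ n * f).HasUnitLeadingTerm d := by
  rcases neg_one_pow_eq_or R[T;T⁻¹] n with h | h
  · rwa [h, one_mul]
  · rw [h, neg_one_mul]
    simpa [HasUnitLeadingTerm, degree, AddMonoidAlgebra.coeff_neg] using hf

end LaurentPolynomial

theorem hasUnitLeadingTerm_qint {k : ℕ} (hk : 0 < k) :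
    (qint k).HasUnitLeadingTerm (2 * k - 2) := by
  refine hasUnitLeadingTerm_of_degree_le ?_ ?_
  · refine (degree_sum_le _ _).trans (Finset.sup_le fun i _ => (degree_T_le _).trans ?_)
    exact WithBot.coe_le_coe.mpr (by omega)
  · have hcoeff : (qint k).coeff (2 * k - 2) = 1 := by
      rw [qint, AddMonoidAlgebra.coeff_sum, Finsupp.finsetSum_apply,
        Finset.sum_eq_single_of_mem 0 (Finset.mem_range.mpr hk), coeff_T,
        if_pos (by push_cast; ring)]
      intro i _ hi
      rw [coeff_T, if_neg (by omega)]
    exact hcoeff ▸ isUnit_one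

theorem hasUnitLeadingTerm_qfact (k : ℕ) : (qfact k).HasUnitLeadingTerm (k * (k - 1)) := by
  induction k with
  | zero => simpa [qfact] using hasUnitLeadingTerm_T (R := ℤ) 0
  | succ k ih =>
    rw [qfact, Finset.prod_range_succ, ← qfact]
    convert ih.mul (hasUnitLeadingTerm_qint k.add_one_pos) using 1
    push_cast
    ring

/-- Let `a, b, c : ℕ` with `a+b+c` even and `|a−b| ≤ c ≤ a+b`.  With
`σ = (a+b+c)/2`, `x = (−a+b+c)/2`, `y = (a−b+c)/2`, `w = (a+b−c)/2` and `T` the quantum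
trinomial (`T·[x]!·[y]!·[w]! = [σ]!`), the colored theta evaluation
`⟨Θ a,b,c⟩ = (−1)^σ [σ+1]·T` has maximal degree
`a(1−a) + b(1−b) + c(1−c) + (a+b+c)²/2`, with top coefficient `±1`. -/
theorem theta_degree (a b c : ℕ) (hparity : Even (a + b + c))
    (htri1 : c ≤ a + b) (htri2 : a ≤ b + c) (htri3 : b ≤ a + c)
    (T : LaurentPolynomial ℤ)
    (hT : T * qfact ((b + c - a) / 2) * qfact ((a + c - b) / 2) * qfact ((a + b - c) / 2)
        = qfact ((a + b + c) / 2))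
    (Θ : LaurentPolynomial ℤ)
    (hΘ : Θ = (-1) ^ ((a + b + c) / 2) * qint ((a + b + c) / 2 + 1) * T)
    (D : ℤ)
    (hD : D = (a : ℤ) * (1 - a) + (b : ℤ) * (1 - b) + (c : ℤ) * (1 - c)
        + ((a : ℤ) + b + c) ^ 2 / 2) :
    Θ.coeff.support.max = (D : WithBot ℤ) ∧ (Θ.coeff D = 1 ∨ Θ.coeff D = -1) := by
  set s := (a + b + c) / 2
  set x := (b + c - a) / 2
  set y := (a + c - b) / 2
  set w := (a + b - c) / 2
  have hT_lead :
      T.HasUnitLeadingTerm (s * (s - 1) - (x * (x - 1) + y * (y - 1) + w * (w - 1))) := by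
    refine (((hasUnitLeadingTerm_qfact x).mul (hasUnitLeadingTerm_qfact y)).mul
      (hasUnitLeadingTerm_qfact w)).of_mul_right ?_
    rw [← mul_assoc, ← mul_assoc, hT]
    exact hasUnitLeadingTerm_qfact s
  have hD_eq :
      D = 2 * (s + 1 : ℕ) - 2 + (s * (s - 1) - (x * (x - 1) + y * (y - 1) + w * (w - 1))) := by
    obtain ⟨k, hk⟩ := hparity
    have ha : (a : ℤ) = y + w := by omega
    have hb : (b : ℤ) = x + w := by omega
    have hc : (c : ℤ) = x + y := by omega
    have hs : (s : ℤ) = x + y + w := by omega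
    rw [hD, ha, hb, hc,
      show ((y + w : ℤ) + (x + w) + (x + y)) ^ 2 = 2 * (2 * (x + y + w) ^ 2) by ring,
      Int.mul_ediv_cancel_left _ two_ne_zero]
    push_cast
    rw [hs]
    ring
  have hΘ_lead : Θ.HasUnitLeadingTerm D := by
    rw [hΘ, mul_assoc, hD_eq]
    exact ((hasUnitLeadingTerm_qint s.add_one_pos).mul hT_lead).neg_one_pow_mul s
  exact ⟨hΘ_lead.1, Int.isUnit_iff.mp hΘ_lead.2⟩
end

section
/- Let n ≥ 1 and let a, b, c be even integers with 0 ≤ a,b,c ≤ 2n and |a−b| ≤ c ≤ a+b. Set σ := (a+b+c)/2, x := (−a+b+c)/2, y := (a−b+c)/2, w := (a+b−c)/2, p₁ := n+a/2, p₂ := n+b/2, p₃ := n+c/2, m := n + (a+b+c−max(a,b,c))/2, and define Δ := Σ_{z = max(σ,p₁,p₂,p₃)}^{m} (−1)^{z+σ} C(z+1, σ+1)·C(x, z−p₁)·C(y, z−p₂)·C(w, z−p₃) ∈ ℤ[v,v⁻¹]. Then, with g(N,k) := 2k(N−k), the polynomial Δ is nonzero with d₊Δ = g(m+1, σ+1)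 + g(x, m−p₁) + g(y, m−p₂) + g(w, m−p₃), and its leading coefficient is ±1. -/
/-!
Cancelling the monic quantum factorials in `C(N,k)·[k]!·[N−k]! = [N]!` shows that `C(N,k)` is
monic of degree `2k(N−k)`. Hence the `z`-th summand of `Δ` is `±1` times a monic Laurent
polynomial whose degree is a concave quadratic in `z`, strictly increasing on the summation range,
so the top summand `z = m` alone determines the degree and the leading coefficient of `Δ`.
-/

open LaurentPolynomial

/-- `g(N,k) = 2k(N−k)`. -/
def gdeg (N k : ℤ) : ℤ := 2 * k * (N - k)

namespace LaurentPolynomial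

section Semiring

variable {R : Type*} [Semiring R] {P Q : R[T;T⁻¹]} {d e : ℤ}

theorem degree_eq_supDegree_s3 (P : R[T;T⁻¹]) : P.degree = P.supDegree (↑) :=
  Finset.max_eq_sup_withBot _

theorem le_of_mem_support_of_degree_le (hP : P.degree ≤ d) (he : e ∈ P.coeff.support) : e ≤ d :=
  WithBot.coe_le_coe.mp ((Finset.le_max he).trans hP)

theorem coeff_eq_zero_of_degree_lt (h : P.degree < e) : P.coeff e = 0 :=
  Finsupp.notMem_support_iff.mp (Finset.notMem_of_max_lt_coe h)

theorem degree_le_of_coeff_ne_zero (h : P.coeff e ≠ 0) : (e : WithBot ℤ) ≤ P.degree :=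
  Finset.le_max (Finsupp.mem_support_iff.mpr h)

theorem degree_add_le (P Q : R[T;T⁻¹]) : (P + Q).degree ≤ max P.degree Q.degree := by
  simpa only [degree_eq_supDegree_s3] using AddMonoidAlgebra.supDegree_add_le

theorem degree_mul_le_s3 (P Q : R[T;T⁻¹]) : (P * Q).degree ≤ P.degree + Q.degree := by
  simpa only [degree_eq_supDegree_s3] using
    AddMonoidAlgebra.supDegree_mul_le (p := P) (q := Q) (D := ((↑) : ℤ → WithBot ℤ))
      (fun _ _ ↦ WithBot.coe_add _ _)

theorem degree_sum_lt {ι : Type*} {s : Finset ι} {f : ι → R[T;T⁻¹]}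
    (h : ∀ i ∈ s, (f i).degree < d) : (∑ i ∈ s, f i).degree < d := by
  rw [degree_eq_supDegree_s3]
  refine AddMonoidAlgebra.supDegree_sum_le.trans_lt ((Finset.sup_lt_iff (WithBot.bot_lt_coe d)).2 ?_)
  simpa only [degree_eq_supDegree_s3] using h

theorem coeff_mul_of_degree_le_s3 {dp dq : ℤ} (hP : P.degree ≤ dp) (hQ : Q.degree ≤ dq) :
    (P * Q).coeff (dp + dq) = P.coeff dp * Q.coeff dq :=
  AddMonoidAlgebra.coeff_mul_add_of_uniqueAdd fun {a b} ha hb hab ↦ by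
    have := le_of_mem_support_of_degree_le hP ha
    have := le_of_mem_support_of_degree_le hQ hb
    omega

end Semiring

section Nontrivial

variable {R : Type*} [Semiring R] [Nontrivial R] {P Q : R[T;T⁻¹]} {d : ℤ}

def IsMonicOfDegree (P : R[T;T⁻¹]) (d : ℤ) : Prop := P.degree = d ∧ P.coeff d = 1

theorem isMonicOfDegree_T (n : ℤ) : IsMonicOfDegree (T n : R[T;T⁻¹]) n :=
  ⟨degree_T n, by simp⟩

theorem isMonicOfDegree_of_degree_le (hP : P.degree ≤ d) (h : P.coeff d = 1) :
    IsMonicOfDegree P d :=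
  ⟨hP.antisymm (degree_le_of_coeff_ne_zero (h ▸ one_ne_zero)), h⟩

theorem IsMonicOfDegree.add_of_degree_lt (hP : IsMonicOfDegree P d) (hQ : Q.degree < d) :
    IsMonicOfDegree (P + Q) d := by
  refine isMonicOfDegree_of_degree_le ((degree_add_le P Q).trans (max_le hP.1.le hQ.le)) ?_
  rw [AddMonoidAlgebra.coeff_add, Finsupp.add_apply, hP.2, coeff_eq_zero_of_degree_lt hQ, add_zero]

theorem IsMonicOfDegree.mul {dq : ℤ} (hP : IsMonicOfDegree P d) (hQ : IsMonicOfDegree Q dq) :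
    IsMonicOfDegree (P * Q) (d + dq) := by
  refine isMonicOfDegree_of_degree_le ((degree_mul_le_s3 P Q).trans ?_) ?_
  · rw [hP.1, hQ.1]; rfl
  · rw [coeff_mul_of_degree_le_s3 hP.1.le hQ.1.le, hP.2, hQ.2, one_mul]

theorem IsMonicOfDegree.of_mul_right {dq s : ℤ} (hPQ : IsMonicOfDegree (P * Q) s)
    (hQ : IsMonicOfDegree Q dq) : IsMonicOfDegree P (s - dq) := by
  have hP0 : P ≠ 0 := by
    rintro rfl
    simpa using hPQ.2
  obtain ⟨dp, hdp⟩ := WithBot.ne_bot_iff_exists.mp (mt degree_eq_bot_iff.mp hP0)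
  have htop : (P * Q).coeff (dp + dq) = P.coeff dp := by
    rw [coeff_mul_of_degree_le_s3 hdp.ge hQ.1.le, hQ.2, mul_one]
  have hs : s = dp + dq := by
    have hle : (s : WithBot ℤ) ≤ dp + dq := hPQ.1 ▸ (degree_mul_le_s3 P Q).trans (by rw [← hdp, hQ.1])
    have hge : ((dp + dq : ℤ) : WithBot ℤ) ≤ s := hPQ.1 ▸ degree_le_of_coeff_ne_zero
      (htop ▸ Finsupp.mem_support_iff.mp (Finset.mem_of_max hdp.symm))
    exact_mod_cast hle.antisymm hge
  rw [hs, add_sub_cancel_right]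
  exact ⟨hdp.symm, htop ▸ hs ▸ hPQ.2⟩

end Nontrivial

section Ring

variable {R : Type*} [Ring R] {P Q : R[T;T⁻¹]} {d : ℤ}

@[simp]
theorem degree_neg (P : R[T;T⁻¹]) : (-P).degree = P.degree := by
  simp only [degree_eq_supDegree_s3, AddMonoidAlgebra.supDegree_neg]

theorem IsMonicOfDegree.neg_add_of_degree_lt [Nontrivial R] (hP : IsMonicOfDegree P d)
    (hQ : Q.degree < d) : (-P + Q).degree = d ∧ (-P + Q).coeff d = -1 := by
  have h := hP.add_of_degree_lt (Q := -Q) (by rwa [degree_neg])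
  rw [show -P + Q = -(P + -Q) by abel, degree_neg, AddMonoidAlgebra.coeff_neg, Finsupp.neg_apply,
    h.2]
  exact ⟨h.1, rfl⟩

theorem degree_sum_sign_mul_eq [Nontrivial R] {ι : Type*} [DecidableEq ι] {s : Finset ι} {i₀ : ι}
    {ε f : ι → R[T;T⁻¹]} (hi₀ : i₀ ∈ s) (hε : ∀ i, ε i = 1 ∨ ε i = -1)
    (hf₀ : IsMonicOfDegree (f i₀) d) (hlt : ∀ i ∈ s, i ≠ i₀ → (f i).degree < d) :
    (∑ i ∈ s, ε i * f i).degree = d ∧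
      ((∑ i ∈ s, ε i * f i).coeff d = 1 ∨ (∑ i ∈ s, ε i * f i).coeff d = -1) := by
  have hrest : (∑ i ∈ s.erase i₀, ε i * f i).degree < d := by
    refine degree_sum_lt fun i hi ↦ ?_
    obtain ⟨hne, hi⟩ := Finset.mem_erase.mp hi
    rcases hε i with h | h <;> simpa [h] using hlt i hi hne
  rw [← Finset.add_sum_erase _ _ hi₀]
  rcases hε i₀ with h | h
  · rw [h, one_mul]
    exact (hf₀.add_of_degree_lt hrest).imp_right Or.inl
  · rw [h, neg_one_mul]
    exact (hf₀.neg_add_of_degree_lt hrest).imp_right Or.inr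

end Ring

end LaurentPolynomial

open LaurentPolynomial

theorem isMonicOfDegree_qint (k : ℕ) : IsMonicOfDegree (qint (k + 1)) (2 * k) := by
  have hT : IsMonicOfDegree (T (2 * ((k + 1 : ℕ) - 1) - 4 * (0 : ℕ)) : ℤ[T;T⁻¹]) (2 * k) := by
    simpa using isMonicOfDegree_T (R := ℤ) (2 * k)
  rw [qint, Finset.sum_range_succ', add_comm]
  refine hT.add_of_degree_lt (degree_sum_lt fun i _ ↦ ?_)
  rw [degree_T, WithBot.coe_lt_coe]
  push_cast
  omega

theorem isMonicOfDegree_qfact (k : ℕ) : IsMonicOfDegree (qfact k) (k * (k - 1)) := by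
  induction k with
  | zero => simpa [qfact, T_zero] using isMonicOfDegree_T (R := ℤ) 0
  | succ k ih =>
    rw [qfact, Finset.prod_range_succ, ← qfact]
    convert ih.mul (isMonicOfDegree_qint k) using 1
    push_cast; ring

theorem isMonicOfDegree_of_mul_qfact_mul_qfact {B : ℤ[T;T⁻¹]} {k l : ℕ}
    (h : B * qfact k * qfact l = qfact (k + l)) : IsMonicOfDegree B (2 * k * l) := by
  have hkl := isMonicOfDegree_qfact (k + l)
  rw [← h] at hkl
  convert (hkl.of_mul_right (isMonicOfDegree_qfact l)).of_mul_right (isMonicOfDegree_qfact k)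
    using 1
  push_cast; ring

theorem isMonicOfDegree_qbinomial (C : ℤ → ℤ → ℤ[T;T⁻¹])
    (hC : ∀ N k : ℤ, 0 ≤ k → k ≤ N →
      C N k * qfact k.toNat * qfact (N - k).toNat = qfact N.toNat)
    {N k : ℤ} (hk : 0 ≤ k) (hkN : k ≤ N) : IsMonicOfDegree (C N k) (gdeg N k) := by
  obtain ⟨k, rfl⟩ := Int.eq_ofNat_of_zero_le hk
  obtain ⟨l, hl⟩ := Int.eq_ofNat_of_zero_le (sub_nonneg.mpr hkN)
  obtain rfl : N = k + l := by omega
  have h := hC (k + l) k hk hkN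
  rw [hl] at h
  convert isMonicOfDegree_of_mul_qfact_mul_qfact (B := C (k + l) k) (by exact_mod_cast h) using 1
  rw [gdeg]; ring

-- As a function of `z`, the left side is `-6z² + 2(4σ + 6n + 1)z + const`.
theorem gdeg_summand_lt {n σ x y w p₁ p₂ p₃ z m : ℤ} (hxyw : x + y + w = σ)
    (hp : p₁ + p₂ + p₃ = 3 * n + σ) (hzm : z < m) (hvertex : 3 * (z + m) ≤ 4 * σ + 6 * n) :
    gdeg (z + 1) (σ + 1) + gdeg x (z - p₁) + gdeg y (z - p₂) + gdeg w (z - p₃) <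
      gdeg (m + 1) (σ + 1) + gdeg x (m - p₁) + gdeg y (m - p₂) + gdeg w (m - p₃) := by
  have hdiff : gdeg (m + 1) (σ + 1) + gdeg x (m - p₁) + gdeg y (m - p₂) + gdeg w (m - p₃) -
      (gdeg (z + 1) (σ + 1) + gdeg x (z - p₁) + gdeg y (z - p₂) + gdeg w (z - p₃)) =
      2 * (m - z) * (4 * σ + 6 * n + 1 - 3 * z - 3 * m) := by
    simp only [gdeg]
    linear_combination (2 * (m - z)) * hxyw + (4 * (m - z)) * hp
  have : 0 < 2 * (m - z) * (4 * σ + 6 * n + 1 - 3 * z - 3 * m) :=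
    mul_pos (by omega) (by omega)
  omega

theorem sixj_quotient_degree_general (n a b c : ℤ)
    (ha : Even a) (hb : Even b) (hc : Even c)
    (ha2 : a ≤ 2 * n) (hb2 : b ≤ 2 * n) (hc2 : c ≤ 2 * n)
    (htri1 : |a - b| ≤ c) (htri2 : c ≤ a + b)
    (C : ℤ → ℤ → LaurentPolynomial ℤ)
    (hC : ∀ N k : ℤ, 0 ≤ k → k ≤ N →
      C N k * qfact k.toNat * qfact (N - k).toNat = qfact N.toNat)
    (σ x y w p₁ p₂ p₃ m : ℤ)
    (hσ : σ = (a + b + c) / 2) (hx : x = (-a + b + c) / 2)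
    (hy : y = (a - b + c) / 2) (hw : w = (a + b - c) / 2)
    (hp₁ : p₁ = n + a / 2) (hp₂ : p₂ = n + b / 2) (hp₃ : p₃ = n + c / 2)
    (hm : m = n + (a + b + c - max a (max b c)) / 2)
    (Δ : LaurentPolynomial ℤ)
    (hΔ : Δ = ∑ z ∈ Finset.Icc (max (max σ p₁) (max p₂ p₃)) m,
      (if Even (z + σ) then (1 : LaurentPolynomial ℤ) else -1) *
        (C (z + 1) (σ + 1) * C x (z - p₁) * C y (z - p₂) * C w (z - p₃)))
    (d : ℤ)
    (hd : d = gdeg (m + 1) (σ + 1) + gdeg x (m - p₁) + gdeg y (m - p₂) + gdeg w (m - p₃)) :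
    Δ ≠ 0 ∧ Δ.coeff.support.max = (d : WithBot ℤ) ∧ (Δ.coeff d = 1 ∨ Δ.coeff d = -1) := by
  obtain ⟨A, hA⟩ := ha
  obtain ⟨B, hB⟩ := hb
  obtain ⟨C', hC'⟩ := hc
  obtain ⟨htri1, htri1'⟩ := abs_le.mp htri1
  have hσ0 : 0 ≤ σ := by omega
  have hσm : σ ≤ m := by omega
  have hpm : p₁ ≤ m ∧ p₂ ≤ m ∧ p₃ ≤ m := by omega
  have hmx : m ≤ p₁ + x ∧ m ≤ p₂ + y ∧ m ≤ p₃ + w := by omega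
  have hvertex : 3 * (2 * m - 1) ≤ 4 * σ + 6 * n := by omega
  have hxyw : x + y + w = σ := by omega
  have hp : p₁ + p₂ + p₃ = 3 * n + σ := by omega
  set Z₀ := max (max σ p₁) (max p₂ p₃)
  have hterm : ∀ z ∈ Finset.Icc Z₀ m,
      IsMonicOfDegree (C (z + 1) (σ + 1) * C x (z - p₁) * C y (z - p₂) * C w (z - p₃))
        (gdeg (z + 1) (σ + 1) + gdeg x (z - p₁) + gdeg y (z - p₂) + gdeg w (z - p₃)) := by
    intro z hz
    simp only [Finset.mem_Icc, Z₀, max_le_iff] at hz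
    refine (((isMonicOfDegree_qbinomial C hC ?_ ?_).mul (isMonicOfDegree_qbinomial C hC ?_ ?_)).mul
      (isMonicOfDegree_qbinomial C hC ?_ ?_)).mul (isMonicOfDegree_qbinomial C hC ?_ ?_) <;> omega
  have hmem : m ∈ Finset.Icc Z₀ m := by
    simp only [Finset.mem_Icc, Z₀, max_le_iff]
    omega
  obtain ⟨hdeg, hcoeff⟩ : Δ.degree = d ∧ (Δ.coeff d = 1 ∨ Δ.coeff d = -1) := by
    rw [hΔ, hd]
    refine degree_sum_sign_mul_eq hmem (fun z ↦ by split_ifs <;> simp) (hterm m hmem)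
      fun z hz hzm ↦ ?_
    have hzm' := lt_of_le_of_ne (Finset.mem_Icc.mp hz).2 hzm
    rw [(hterm z hz).1, WithBot.coe_lt_coe]
    exact gdeg_summand_lt hxyw hp hzm' (by omega)
  exact ⟨fun h ↦ by simp [h] at hdeg, hdeg, hcoeff⟩

/-- The 6j-symbol quotient `Δ(a,b,c,n,n,n)` is nonzero, has maximal degree
`g(m+1,σ+1) + g(x,m−p₁) + g(y,m−p₂) + g(w,m−p₃)`, and leading coefficient `±1`.
Here `C : ℤ → ℤ → ℤ[v,v⁻¹]` is the symmetric quantum binomial coefficient: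
`C(N,k)·[k]!·[N−k]! = [N]!` for `0 ≤ k ≤ N`, and `C(N,k) = 0` for `k < 0` or `k > N`. -/
theorem sixj_quotient_degree (n a b c : ℤ) (hn : 1 ≤ n)
    (ha : Even a) (hb : Even b) (hc : Even c)
    (ha0 : 0 ≤ a) (hb0 : 0 ≤ b) (hc0 : 0 ≤ c)
    (ha2 : a ≤ 2 * n) (hb2 : b ≤ 2 * n) (hc2 : c ≤ 2 * n)
    (htri1 : |a - b| ≤ c) (htri2 : c ≤ a + b)
    (C : ℤ → ℤ → LaurentPolynomial ℤ)
    (hC : ∀ N k : ℤ, 0 ≤ k → k ≤ N →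
      C N k * qfact k.toNat * qfact (N - k).toNat = qfact N.toNat)
    (hC0 : ∀ N k : ℤ, k < 0 ∨ N < k → C N k = 0)
    (σ x y w p₁ p₂ p₃ m : ℤ)
    (hσ : σ = (a + b + c) / 2) (hx : x = (-a + b + c) / 2)
    (hy : y = (a - b + c) / 2) (hw : w = (a + b - c) / 2)
    (hp₁ : p₁ = n + a / 2) (hp₂ : p₂ = n + b / 2) (hp₃ : p₃ = n + c / 2)
    (hm : m = n + (a + b + c - max a (max b c)) / 2)
    (Δ : LaurentPolynomial ℤ)
    (hΔ : Δ = ∑ z ∈ Finset.Icc (max (max σ p₁) (max p₂ p₃)) m,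
      (if Even (z + σ) then (1 : LaurentPolynomial ℤ) else -1) *
        (C (z + 1) (σ + 1) * C x (z - p₁) * C y (z - p₂) * C w (z - p₃)))
    (d : ℤ)
    (hd : d = gdeg (m + 1) (σ + 1) + gdeg x (m - p₁) + gdeg y (m - p₂) + gdeg w (m - p₃)) :
    Δ ≠ 0 ∧ Δ.coeff.support.max = (d : WithBot ℤ) ∧ (Δ.coeff d = 1 ∨ Δ.coeff d = -1) :=
  sixj_quotient_degree_general n a b c ha hb hc ha2 hb2 hc2 htri1 htri2 C hC σ x y w p₁ p₂ p₃ m hσ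
    hx hy hw hp₁ hp₂ hp₃ hm Δ hΔ d hd
end

section
/- Let n ≥ 1 and let a, b, c be even integers with 0 ≤ a,b,c ≤ 2n and |a−b| ≤ c ≤ a+b. Set σ := (a+b+c)/2, x := (−a+b+c)/2, y := (a−b+c)/2, w := (a+b−c)/2, p₁ := n+a/2, p₂ := n+b/2, p₃ := n+c/2, m := n + (a+b+c−max(a,b,c))/2, g(N,k) := 2k(N−k), and define h(z) := g(z+1, σ+1) + g(x, z−p₁) + g(y, z−p₂) + g(w, z−p₃). Then m = min(p₁+x, p₂+y, p₃+w), and for every integer z with max(σ, p₁, p₂, p₃) ≤ z < m one has h(z) < h(m); i.e. h attains its maximum on the integer interval [max(σ,p₁,p₂,p₃), m] uniquely at its right endpoint z = m. -/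
/-- The degree maximization underlying the maximal degree of `Δ(a,b,c,n,n,n)`:
with `h(z) = g(z+1,σ+1) + g(x,z−p₁) + g(y,z−p₂) + g(w,z−p₃)`, one has
`m = min(p₁+x, p₂+y, p₃+w)`, and `h` attains its maximum on the integer interval
`[max(σ,p₁,p₂,p₃), m]` uniquely at the right endpoint `z = m`. -/
theorem sixj_summand_degree_max (n a b c : ℤ) (hn : 1 ≤ n)
    (ha : Even a) (hb : Even b) (hc : Even c)
    (ha0 : 0 ≤ a) (hb0 : 0 ≤ b) (hc0 : 0 ≤ c)
    (ha2 : a ≤ 2 * n) (hb2 : b ≤ 2 * n) (hc2 : c ≤ 2 * n)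
    (htri1 : |a - b| ≤ c) (htri2 : c ≤ a + b)
    (σ x y w p₁ p₂ p₃ m : ℤ)
    (hσ : σ = (a + b + c) / 2) (hx : x = (-a + b + c) / 2)
    (hy : y = (a - b + c) / 2) (hw : w = (a + b - c) / 2)
    (hp₁ : p₁ = n + a / 2) (hp₂ : p₂ = n + b / 2) (hp₃ : p₃ = n + c / 2)
    (hm : m = n + (a + b + c - max a (max b c)) / 2)
    (h : ℤ → ℤ)
    (hh : ∀ z : ℤ, h z = gdeg (z + 1) (σ + 1) + gdeg x (z - p₁) + gdeg y (z - p₂)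
        + gdeg w (z - p₃)) :
    m = min (p₁ + x) (min (p₂ + y) (p₃ + w)) ∧
    ∀ z : ℤ, max (max σ p₁) (max p₂ p₃) ≤ z → z < m → h z < h m := by
  obtain ⟨a', rfl⟩ : ∃ a', a = 2 * a' := by
    obtain ⟨a', ha'⟩ := ha; exact ⟨a', by omega⟩
  obtain ⟨b', rfl⟩ : ∃ b', b = 2 * b' := by
    obtain ⟨b', hb'⟩ := hb; exact ⟨b', by omega⟩
  obtain ⟨c', rfl⟩ : ∃ c', c = 2 * c' := by
    obtain ⟨c', hc'⟩ := hc; exact ⟨c', by omega⟩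
  have habs : -(2 * c') ≤ 2 * a' - 2 * b' ∧ 2 * a' - 2 * b' ≤ 2 * c' := by
    have := htri1; rw [abs_le] at this; exact this
  clear htri1 ha hb hc
  have hσ' : σ = a' + b' + c' := by
    clear hx hy hw hp₁ hp₂ hp₃ hm hh; omega
  have hx' : x = -a' + b' + c' := by
    clear hσ hσ' hy hw hp₁ hp₂ hp₃ hm hh; omega
  have hy' : y = a' - b' + c' := by
    clear hσ hσ' hx hx' hw hp₁ hp₂ hp₃ hm hh; omega
  have hw' : w = a' + b' - c' := by
    clear hσ hσ' hx hx' hy hy' hp₁ hp₂ hp₃ hm hh; omega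
  have hp₁' : p₁ = n + a' := by
    clear hσ hσ' hx hx' hy hy' hw hw' hp₂ hp₃ hm hh; omega
  have hp₂' : p₂ = n + b' := by
    clear hσ hσ' hx hx' hy hy' hw hw' hp₁ hp₁' hp₃ hm hh; omega
  have hp₃' : p₃ = n + c' := by
    clear hσ hσ' hx hx' hy hy' hw hw' hp₁ hp₁' hp₂ hp₂' hm hh; omega
  have hm' : m = n + (a' + b' + c') - max a' (max b' c') := by
    clear hσ hσ' hx hx' hy hy' hw hw' hp₁ hp₁' hp₂ hp₂' hp₃ hp₃' hh; omega
  clear hσ hx hy hw hp₁ hp₂ hp₃ hm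
  constructor
  · omega
  · have step : ∀ z : ℤ, z < m → h z < h (z + 1) := by
      intro z hz
      have hd : h (z + 1) - h z
          = 2 * (σ + x + y + w) + 4 * (p₁ + p₂ + p₃) - 12 * z - 4 := by
        rw [hh, hh]; unfold gdeg; ring
      have hpos : 0 < 2 * (σ + x + y + w) + 4 * (p₁ + p₂ + p₃) - 12 * z - 4 := by
        omega
      omega
    intro z _ hz
    have key : ∀ k : ℕ, ∀ z : ℤ, m - z = (k : ℤ) + 1 → h z < h m := by
      intro k
      induction k with
      | zero =>
          intro z hz
          have h1 := step z (by omega)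
          have h2 : z + 1 = m := by omega
          exact h2 ▸ h1
      | succ k ih =>
          intro z hz
          have h1 : h z < h (z + 1) := step z (by omega)
          have h2 : h (z + 1) < h m := ih (z + 1) (by omega)
          omega
    exact key (m - z - 1).toNat z (by omega)
end

section
/- Let r, s, t be integers with r ≤ −1, s > −2r and t > −2r, and let n ≥ 0. Then for all real numbers b, c ≥ 0 with (b,c) ≠ (0,0) one has R(b,c) < R(0,0) = −2n. In particular, the maximum of R over pairs of even integers b, c ≥ 0 with b+c ≤ 2n equals −2n and is attained only at (b,c) = (0,0). -/
/-- The quadratic `R(b,c)`: the maximal `v`-degree of the summand with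
`(a,b,c) = (b+c,b,c)` in the fusion state sum for the `(n+1)`-colored Jones polynomial
of the pretzel knot `P(1/r,1/s,1/t)`. -/
noncomputable def Rpoly (r s t n : ℤ) (b c : ℝ) : ℝ :=
  -((r + s : ℝ) / 2) * b ^ 2 - ((1 : ℝ) + r) * b * c - ((r + t : ℝ) / 2) * c ^ 2
    + ((2 : ℝ) - r - s) * b + ((2 : ℝ) - r - t) * c - 2 * n

/-- If `r ≤ −1`, `s > −2r`, `t > −2r` and `n ≥ 0`, then `R(b,c) < R(0,0) = −2n` for all
real `b, c ≥ 0` with `(b,c) ≠ (0,0)`; in particular the maximum of `R` over even integers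
`b, c ≥ 0` with `b + c ≤ 2n` equals `−2n` and is attained only at `(0,0)`. -/
theorem R_max_at_origin (r s t n : ℤ) (hr : r ≤ -1) (hs : s > -2 * r) (ht : t > -2 * r)
    (hn : 0 ≤ n) :
    (∀ b c : ℝ, 0 ≤ b → 0 ≤ c → (b, c) ≠ (0, 0) →
      Rpoly r s t n b c < Rpoly r s t n 0 0) ∧
    Rpoly r s t n 0 0 = -2 * n ∧
    IsGreatest {x : ℝ | ∃ b c : ℤ, Even b ∧ Even c ∧ 0 ≤ b ∧ 0 ≤ c ∧ b + c ≤ 2 * n ∧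
      Rpoly r s t n b c = x} (-2 * n) ∧
    (∀ b c : ℤ, Even b → Even c → 0 ≤ b → 0 ≤ c → b + c ≤ 2 * n →
      Rpoly r s t n (b : ℝ) (c : ℝ) = -2 * n → b = 0 ∧ c = 0) := by
  have hr' : (r : ℝ) ≤ -1 := by exact_mod_cast hr
  have hs' : (-2 * r + 1 : ℝ) ≤ s := by exact_mod_cast hs
  have ht' : (-2 * r + 1 : ℝ) ≤ t := by exact_mod_cast ht
  have R00 : Rpoly r s t n 0 0 = -2 * n := by unfold Rpoly; ring
  have key : ∀ b c : ℝ, 0 ≤ b → 0 ≤ c → (b, c) ≠ (0, 0) →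
      Rpoly r s t n b c < Rpoly r s t n 0 0 := by
    intro b c hb hc hne
    have hbc : 0 < b ^ 2 + c ^ 2 := by
      have h : b ≠ 0 ∨ c ≠ 0 := by
        by_contra h
        push_neg at h
        exact hne (by simp [h.1, h.2])
      rcases h with h | h
      · positivity
      · positivity
    unfold Rpoly
    nlinarith [sq_nonneg (b - c), sq_nonneg (b + c), mul_nonneg hb hc,
      mul_nonneg (by linarith : (0:ℝ) ≤ (s : ℝ) + 2 * r - 1) (sq_nonneg b),
      mul_nonneg (by linarith : (0:ℝ) ≤ (t : ℝ) + 2 * r - 1) (sq_nonneg c),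
      mul_nonneg (by linarith : (0:ℝ) ≤ (s : ℝ) + r - 2) hb,
      mul_nonneg (by linarith : (0:ℝ) ≤ (t : ℝ) + r - 2) hc,
      mul_nonneg (by linarith : (0:ℝ) ≤ -1 - r) (sq_nonneg (b - c))]
  refine ⟨key, R00, ⟨⟨0, 0, Even.zero, Even.zero, le_refl 0, le_refl 0, by linarith, by
      push_cast; rw [R00]⟩, ?_⟩, ?_⟩
  · rintro x ⟨b, c, _, _, hb, hc, _, rfl⟩
    by_cases h : b = 0 ∧ c = 0
    · rw [h.1, h.2]; push_cast; rw [R00]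
    · have hne : ((b : ℝ), (c : ℝ)) ≠ ((0 : ℝ), (0 : ℝ)) := by
        intro heq
        rw [Prod.mk.injEq] at heq
        exact h ⟨by exact_mod_cast heq.1, by exact_mod_cast heq.2⟩
      have := key b c (by exact_mod_cast hb) (by exact_mod_cast hc) hne
      rw [R00] at this
      linarith
  · intro b c _ _ hb hc _ heq
    by_contra h
    rw [not_and_or] at h
    have hne : ((b : ℝ), (c : ℝ)) ≠ ((0 : ℝ), (0 : ℝ)) := by
      intro heq'
      rw [Prod.mk.injEq] at heq'
      rcases h with h | h
      · exact h (by exact_mod_cast heq'.1)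
      · exact h (by exact_mod_cast heq'.2)
    have := key b c (by exact_mod_cast hb) (by exact_mod_cast hc) hne
    rw [R00, heq] at this
    exact lt_irrefl _ this
end

section
/- Let r, s, t be integers with r ≤ −1 and s, t ≥ 2, and let n ≥ 0. If s < −r, then R(b+2, c) > R(b,c) for all real b, c ≥ 0; if t < −r, then R(b, c+2) > R(b,c) for all real b, c ≥ 0. Consequently, if s < −r or t < −r, then for every pair of even integers b, c ≥ 0 with b+c ≤ 2n there is an even integer b₀ with 0 ≤ b₀ ≤ 2n and R(b,c) ≤ R(b₀, 2n−b₀); i.e. the maximum of R over even lattice points of the triangle {b,c ≥ 0, b+c ≤ 2n} is attained on the line b+c = 2n. -/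
/-- If `r ≤ −1`, `s, t ≥ 2`, `n ≥ 0`, and `s < −r` (resp. `t < −r`), then `R` strictly
increases when `b` (resp. `c`) increases by `2`; consequently, if `s < −r` or `t < −r`
then the maximum of `R` over even lattice points of `{b, c ≥ 0, b + c ≤ 2n}` is attained
on the line `b + c = 2n`. -/
theorem R_max_on_diagonal (r s t n : ℤ) (hr : r ≤ -1) (hs : 2 ≤ s) (ht : 2 ≤ t)
    (hn : 0 ≤ n) :
    (s < -r → ∀ b c : ℝ, 0 ≤ b → 0 ≤ c →
      Rpoly r s t n (b + 2) c > Rpoly r s t n b c) ∧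
    (t < -r → ∀ b c : ℝ, 0 ≤ b → 0 ≤ c →
      Rpoly r s t n b (c + 2) > Rpoly r s t n b c) ∧
    ((s < -r ∨ t < -r) → ∀ b c : ℤ, Even b → Even c → 0 ≤ b → 0 ≤ c → b + c ≤ 2 * n →
      ∃ b₀ : ℤ, Even b₀ ∧ 0 ≤ b₀ ∧ b₀ ≤ 2 * n ∧
        Rpoly r s t n (b : ℝ) (c : ℝ) ≤ Rpoly r s t n (b₀ : ℝ) ((2 * n - b₀ : ℤ) : ℝ)) := by
  have hstep_b : s < -r → ∀ b c : ℝ, 0 ≤ b → 0 ≤ c →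
      Rpoly r s t n (b + 2) c > Rpoly r s t n b c := by
    intro hsr b c hb hc
    have h1 : (r + s : ℝ) ≤ 0 := by
      have : r + s ≤ 0 := by omega
      exact_mod_cast this
    have h2 : (1 + r : ℝ) ≤ 0 := by
      have : 1 + r ≤ 0 := by omega
      exact_mod_cast this
    simp only [Rpoly]
    nlinarith [mul_nonneg hb hc, mul_nonpos_of_nonpos_of_nonneg h1 hb,
      mul_nonpos_of_nonpos_of_nonneg h2 hc]
  have hstep_c : t < -r → ∀ b c : ℝ, 0 ≤ b → 0 ≤ c →
      Rpoly r s t n b (c + 2) > Rpoly r s t n b c := by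
    intro htr b c hb hc
    have h1 : (r + t : ℝ) ≤ 0 := by
      have : r + t ≤ 0 := by omega
      exact_mod_cast this
    have h2 : (1 + r : ℝ) ≤ 0 := by
      have : 1 + r ≤ 0 := by omega
      exact_mod_cast this
    simp only [Rpoly]
    nlinarith [mul_nonneg hb hc, mul_nonpos_of_nonpos_of_nonneg h1 hc,
      mul_nonpos_of_nonpos_of_nonneg h2 hb]
  have mono_b : s < -r → ∀ (k : ℕ) (b c : ℝ), 0 ≤ b → 0 ≤ c →
      Rpoly r s t n b c ≤ Rpoly r s t n (b + 2 * k) c := by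
    intro hsr k
    induction k with
    | zero => intro b c _ _; norm_num
    | succ m ih =>
        intro b c hb hc
        have h1 := ih b c hb hc
        have h2 := hstep_b hsr (b + 2 * m) c (by positivity) hc
        have : (b + 2 * (m + 1 : ℕ) : ℝ) = (b + 2 * m) + 2 := by push_cast; ring
        rw [this]
        linarith
  have mono_c : t < -r → ∀ (k : ℕ) (b c : ℝ), 0 ≤ b → 0 ≤ c →
      Rpoly r s t n b c ≤ Rpoly r s t n b (c + 2 * k) := by
    intro htr k
    induction k with
    | zero => intro b c _ _; norm_num
    | succ m ih =>
        intro b c hb hc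
        have h1 := ih b c hb hc
        have h2 := hstep_c htr b (c + 2 * m) hb (by positivity)
        have : (c + 2 * (m + 1 : ℕ) : ℝ) = (c + 2 * m) + 2 := by push_cast; ring
        rw [this]
        linarith
  refine ⟨hstep_b, hstep_c, ?_⟩
  intro hor b c hbe hce hb hc hbc
  obtain ⟨k, hk⟩ : ∃ k : ℤ, 2 * n - b - c = 2 * k := by
    obtain ⟨p, hp⟩ := hbe
    obtain ⟨q, hq⟩ := hce
    exact ⟨n - p - q, by omega⟩
  have hk0 : 0 ≤ k := by omega
  rcases hor with hsr | htr
  · refine ⟨b + 2 * k, ?_, by omega, by omega, ?_⟩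
    · obtain ⟨p, hp⟩ := hbe; exact ⟨p + k, by omega⟩
    · have hc2n : (2 * n - (b + 2 * k) : ℤ) = c := by omega
      rw [hc2n]
      have := mono_b hsr k.toNat (b : ℝ) (c : ℝ) (by exact_mod_cast hb) (by exact_mod_cast hc)
      have hkk : ((k.toNat : ℕ) : ℝ) = (k : ℝ) := by
        exact_mod_cast congrArg (Int.cast : ℤ → ℝ) (Int.toNat_of_nonneg hk0)
      have hcast : ((b + 2 * k : ℤ) : ℝ) = (b : ℝ) + 2 * (k.toNat : ℕ) := by
        rw [hkk]; push_cast; ring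
      rw [hcast]
      exact this
  · refine ⟨b, hbe, hb, by omega, ?_⟩
    have hkk : ((k.toNat : ℕ) : ℝ) = (k : ℝ) := by
      exact_mod_cast congrArg (Int.cast : ℤ → ℝ) (Int.toNat_of_nonneg hk0)
    have hc2n : ((2 * n - b : ℤ) : ℝ) = (c : ℝ) + 2 * (k.toNat : ℕ) := by
      rw [hkk]
      have : (2 * n - b : ℤ) = c + 2 * k := by omega
      push_cast [this]; ring
    rw [hc2n]
    exact mono_c htr k.toNat (b : ℝ) (c : ℝ) (by exact_mod_cast hb) (by exact_mod_cast hc)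
end

section
/- Let s, t be odd integers with s, t ≥ 3 and set P := (s+t−2)/2, a positive integer. Let N ≥ 1 be an integer and write N = qP + j with integers q ≥ 0 and 0 ≤ j < P. Then m′ := (t−1)q − 1 + v_j is an even integer and |m − m′| ≤ 1, where m := 2(t−1)N/(s+t−2) − 1 = (2(N−1)(t−1)+t−s)/(s+t−2). -/
/-- Let `s, t` be odd integers `≥ 3`, `P = (s+t−2)/2 > 0`, and write `N = qP + j` with
`q ≥ 0`, `0 ≤ j < P`, `N ≥ 1`.  Let `v` be the odd integer nearest to
`2(t−1)j/(s+t−2)` (the smaller one in case of a tie, i.e. the unique odd `v` with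
`x − 1 ≤ v < x + 1` for `x = 2(t−1)j/(s+t−2)`).  Then `m′ = (t−1)q − 1 + v` is an even
integer within distance `1` of `m = 2(t−1)N/(s+t−2) − 1 = (2(N−1)(t−1)+t−s)/(s+t−2)`. -/
theorem nearest_even_integer_to_vertex (s t : ℤ) (hsodd : Odd s) (htodd : Odd t)
    (hs : 3 ≤ s) (ht : 3 ≤ t)
    (P : ℤ) (hP : P = (s + t - 2) / 2)
    (N q j : ℤ) (hN1 : 1 ≤ N) (hq : 0 ≤ q) (hj0 : 0 ≤ j) (hjP : j < P)
    (hNqj : N = q * P + j)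
    (x : ℚ) (hx : x = 2 * (t - 1) * j / (s + t - 2))
    (v : ℤ) (hvodd : Odd v) (hv1 : x - 1 ≤ (v : ℚ)) (hv2 : (v : ℚ) < x + 1)
    (m' : ℤ) (hm' : m' = (t - 1) * q - 1 + v)
    (m : ℚ) (hm : m = 2 * (t - 1) * N / (s + t - 2) - 1) :
    0 < P ∧
    m = (2 * (N - 1) * (t - 1) + t - s) / (s + t - 2) ∧
    Even m' ∧
    |m - (m' : ℚ)| ≤ 1 := by

  obtain ⟨a, ha⟩ := hsodd
  obtain ⟨b, hb⟩ := htodd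
  obtain ⟨c, hc⟩ := hvodd
  have hst : s + t - 2 = 2 * P := by omega
  have hPpos : 0 < P := by omega
  have hden : ((s : ℚ) + t - 2) ≠ 0 := by
    have h4 : (4 : ℤ) ≤ s + t - 2 := by omega
    have : (4 : ℚ) ≤ (s : ℚ) + t - 2 := by exact_mod_cast h4
    linarith
  refine ⟨hPpos, ?_, ?_, ?_⟩
  · rw [hm]; field_simp; ring
  · exact ⟨b * q + c, by rw [hm', hb, hc]; ring⟩
  · have hP0 : ((P : ℚ)) ≠ 0 := by
      exact_mod_cast hPpos.ne'
    have hmx : m = (t - 1) * q + x - 1 := by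
      rw [hm, hx]
      have h1 : ((s : ℚ) + t - 2) = 2 * P := by exact_mod_cast hst
      have h2 : ((N : ℚ)) = q * P + j := by exact_mod_cast hNqj
      rw [h1, h2]
      field_simp
    have hm'q : ((m' : ℚ)) = (t - 1) * q - 1 + v := by exact_mod_cast hm'
    rw [hmx, hm'q, abs_le]
    constructor <;> [linarith; linarith]
end

section
/- Let s, t be real numbers with s+t ≠ 2. Suppose real numbers Q, B, C satisfy Q ≠ 0, 1+B(s−1) ≠ 0, 1+C(t−1) ≠ 0, together with the equations (Q−1)/Q = B(s−1)/(1+B(s−1)) = C(t−1)/(1+C(t−1)) and 1/Q = B/(1+B(s−1)) + C/(1+C(t−1)). Then B = (t−1)/(s+t−2), C = (s−1)/(s+t−2), and Q = (st−1)/(s+t−2). Consequently, for every real number r: 2(2 − r − Q − B − C) − 2 = 2((1−st)/(s+t−2) − r), and r + Q + B + C − C(t−1) = r + 2. -/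
/-- The Hatcher–Oertel gluing equations (condition (E4)) for the edgepath system
`⟨1/r⟩—⋯—⟨−1⟩, ⟨1/s⟩—⟨0⟩, ⟨1/t⟩—⟨0⟩` of the pretzel knot `P(1/r,1/s,1/t)`: their unique
solution is `B = (t−1)/(s+t−2)`, `C = (s−1)/(s+t−2)`, `Q = (st−1)/(s+t−2)`; consequently
the boundary slope is `2((1−st)/(s+t−2) − r)` and the normalized Euler characteristic is
`r + 2`. -/
theorem hatcher_oertel_gluing (s t : ℝ) (hst : s + t ≠ 2)
    (Q B C : ℝ) (hQ : Q ≠ 0) (hB : 1 + B * (s - 1) ≠ 0) (hC : 1 + C * (t - 1) ≠ 0)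
    (heq1 : (Q - 1) / Q = B * (s - 1) / (1 + B * (s - 1)))
    (heq2 : B * (s - 1) / (1 + B * (s - 1)) = C * (t - 1) / (1 + C * (t - 1)))
    (heq3 : 1 / Q = B / (1 + B * (s - 1)) + C / (1 + C * (t - 1))) :
    B = (t - 1) / (s + t - 2) ∧
    C = (s - 1) / (s + t - 2) ∧
    Q = (s * t - 1) / (s + t - 2) ∧
    ∀ r : ℝ,
      2 * (2 - r - Q - B - C) - 2 = 2 * ((1 - s * t) / (s + t - 2) - r) ∧
      r + Q + B + C - C * (t - 1) = r + 2 := by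
  have hst' : s + t - 2 ≠ 0 := sub_ne_zero.mpr hst
  field_simp at heq1 heq2 heq3
  have h1 : B * (s - 1) = Q - 1 := by nlinarith [heq1, sq_nonneg Q]
  have h2 : C * (t - 1) = Q - 1 := by nlinarith [heq2, h1]
  have h3 : B + C = 1 := by
    have : Q * (B * (1 + C * (t - 1)) + C * (1 + B * (s - 1))) = (1 + B * (s - 1)) * (1 + C * (t - 1)) := by linarith [heq3]
    have hq1 : 1 + B * (s-1) = Q := by linarith
    have hq2 : 1 + C * (t-1) = Q := by linarith
    rw [hq1, hq2] at this
    have := mul_left_cancel₀ hQ (by linarith [this] : Q * (B * Q + C * Q) = Q * Q)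
    have hq : B * Q + C * Q = Q := this
    have : (B + C) * Q = 1 * Q := by ring_nf; linarith [hq]
    exact mul_right_cancel₀ hQ this
  have hBv : B = (t - 1) / (s + t - 2) := by
    field_simp; linear_combination h1 - h2 + (t-1)*h3
  have hCv : C = (s - 1) / (s + t - 2) := by
    field_simp; linear_combination h2 - h1 + (s-1)*h3
  have hQv : Q = (s * t - 1) / (s + t - 2) := by
    field_simp
    have : Q = 1 + B * (s - 1) := by linarith
    rw [this, hBv]; field_simp; ring
  refine ⟨hBv, hCv, hQv, fun r => ⟨?_, ?_⟩⟩
  · rw [hBv, hCv, hQv]; field_simp; ring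
  · rw [hCv, hQv, hBv]; field_simp; ring
end
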